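/- arXiv:1407.0364 — 2 statements merged into one kernel-verified Lean document; each statement's English description precedes it below -/
import Mathlib

section
/- Let Δ be a real random variable which, conditionally on a random variable V ≥ 0, is centered Gaussian with variance V. Suppose there exist C, c > 0 and α > 1 with P[V ≥ x] ≤ C·exp(-c·x^α) for all x ≥ 0. Then there exist C' > 0 and δ = min(c, 1/2) > 0 such that P[Δ ≥ x] ≤ C'·exp(-δ·x^{2α/(1+α)}) for all x > 0. -/
open MeasureTheory ProbabilityTheory Real Set Filter Topology

/-- The standard Gaussian upper tail function `Φ(u) = (2π)^{-1/2} ∫_u^∞ e^{-s²/2} ds`. -/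
noncomputable def gaussTail (u : ℝ) : ℝ :=
  (1 / Real.sqrt (2 * Real.pi)) * ∫ s in Set.Ioi u, Real.exp (-s ^ 2 / 2)

lemma gauss_integrand_eq :
    (fun s : ℝ => Real.exp (-s ^ 2 / 2)) = fun s => Real.exp (-(1/2) * s ^ 2) := by
  funext s; ring_nf

lemma integrable_gauss : Integrable (fun s : ℝ => Real.exp (-s ^ 2 / 2)) := by
  rw [gauss_integrand_eq]; exact integrable_exp_neg_mul_sq (by norm_num)

lemma integral_gauss : ∫ s : ℝ, Real.exp (-s ^ 2 / 2) = Real.sqrt (2 * Real.pi) := by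
  rw [gauss_integrand_eq, integral_gaussian, show Real.pi / (1/2) = 2 * Real.pi by ring]

lemma gaussTail_nonneg (u : ℝ) : 0 ≤ gaussTail u :=
  mul_nonneg (by positivity) (integral_nonneg fun s => (Real.exp_pos _).le)

lemma sqrt_two_pi_pos : 0 < Real.sqrt (2 * Real.pi) :=
  Real.sqrt_pos.mpr (by positivity)

lemma gaussTail_le_one (u : ℝ) : gaussTail u ≤ 1 := by
  unfold gaussTail
  rw [one_div_mul_eq_div, div_le_one sqrt_two_pi_pos]
  exact (setIntegral_le_integral integrable_gauss
    (ae_of_all _ fun s => (Real.exp_pos _).le)).trans_eq integral_gauss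

lemma gaussTail_antitone : Antitone gaussTail := by
  intro u v huv
  unfold gaussTail
  refine mul_le_mul_of_nonneg_left ?_ (by positivity)
  exact setIntegral_mono_set integrable_gauss.integrableOn
    (ae_of_all _ fun s => (Real.exp_pos _).le)
    (HasSubset.Subset.eventuallyLE (Set.Ioi_subset_Ioi huv))

lemma gaussTail_measurable : Measurable gaussTail := gaussTail_antitone.measurable

lemma gaussTail_le_exp {u : ℝ} (hu : 0 ≤ u) : gaussTail u ≤ Real.exp (-u ^ 2 / 2) := by
  have hint2 : Integrable (fun s : ℝ => Real.exp (-u^2/2) * Real.exp (-(s-u)^2/2)) := by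
    exact (integrable_gauss.comp_sub_right u).const_mul _
  have hpt : ∀ s ∈ Set.Ioi u,
      Real.exp (-s^2/2) ≤ Real.exp (-u^2/2) * Real.exp (-(s-u)^2/2) := by
    intro s hs
    rw [← Real.exp_add]
    apply Real.exp_le_exp.mpr
    have h : u ≤ s := le_of_lt hs
    nlinarith [mul_nonneg hu (sub_nonneg.mpr h)]
  have h1 : ∫ s in Set.Ioi u, Real.exp (-s^2/2)
      ≤ ∫ s in Set.Ioi u, Real.exp (-u^2/2) * Real.exp (-(s-u)^2/2) :=
    setIntegral_mono_on integrable_gauss.integrableOn hint2.integrableOn measurableSet_Ioi hpt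
  have h4 : ∫ s in Set.Ioi u, Real.exp (-(s-u)^2/2) ≤ ∫ s : ℝ, Real.exp (-(s-u)^2/2) :=
    setIntegral_le_integral (integrable_gauss.comp_sub_right u)
      (ae_of_all _ fun s => (Real.exp_pos _).le)
  have h5 : ∫ s : ℝ, Real.exp (-(s-u)^2/2) = Real.sqrt (2 * Real.pi) := by
    rw [show (fun s : ℝ => Real.exp (-(s-u)^2/2))
        = fun s : ℝ => (fun t : ℝ => Real.exp (-t^2/2)) (s - u) from rfl]
    rw [integral_sub_right_eq_self (fun t : ℝ => Real.exp (-t^2/2)) u]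
    exact integral_gauss
  have h3 : ∫ s in Set.Ioi u, Real.exp (-u^2/2) * Real.exp (-(s-u)^2/2)
      ≤ Real.exp (-u^2/2) * Real.sqrt (2 * Real.pi) := by
    rw [integral_const_mul]
    exact mul_le_mul_of_nonneg_left (h4.trans_eq h5) (Real.exp_nonneg _)
  unfold gaussTail
  rw [one_div_mul_eq_div, div_le_iff₀ sqrt_two_pi_pos]
  linarith

lemma gaussTail_zero_pos : 0 < gaussTail 0 := by
  unfold gaussTail
  apply mul_pos (by positivity)
  rw [gauss_integrand_eq, integral_gaussian_Ioi]
  positivity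

theorem stmt6 {Ω : Type*} [MeasureSpace Ω] [IsProbabilityMeasure (ℙ : Measure Ω)]
    (Δ V : Ω → ℝ) (hΔ : Measurable Δ) (hV : Measurable V) (hVpos : ∀ ω, 0 ≤ V ω)
    (hcond : ∀ x : ℝ, 0 < x →
      (ℙ {ω | x ≤ Δ ω}).toReal = ∫ z, gaussTail (x * z ^ (-(1 / 2) : ℝ)) ∂(Measure.map V ℙ))
    (C c α : ℝ) (hC : 0 < C) (hc : 0 < c) (hα : 1 < α)
    (htail : ∀ x ≥ 0, (ℙ {ω | x ≤ V ω}).toReal ≤ C * Real.exp (-c * x ^ α)) :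
    ∃ C' > 0, ∀ x > 0,
      (ℙ {ω | x ≤ Δ ω}).toReal ≤ C' * Real.exp (-(min c (1 / 2)) * x ^ (2 * α / (1 + α))) := by
  set μ := Measure.map V ℙ with hμdef
  have hμprob : IsProbabilityMeasure μ := Measure.isProbabilityMeasure_map hV.aemeasurable
  have hmeas_f : ∀ x : ℝ, Measurable (fun z : ℝ => gaussTail (x * z ^ (-(1 / 2) : ℝ))) := by
    intro x
    exact gaussTail_measurable.comp (by fun_prop)
  have hint_f : ∀ x : ℝ, Integrable (fun z : ℝ => gaussTail (x * z ^ (-(1 / 2) : ℝ))) μ := by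
    intro x
    refine (integrable_const (1:ℝ)).mono' (hmeas_f x).aestronglyMeasurable ?_
    refine ae_of_all _ fun z => ?_
    rw [Real.norm_eq_abs, abs_of_nonneg (gaussTail_nonneg _)]
    exact gaussTail_le_one _
  -- the law of V has no atom at 0
  have hzero : μ {0} = 0 := by
    by_contra h
    have hp : 0 < (μ {0}).toReal := ENNReal.toReal_pos h (measure_ne_top μ _)
    have hlow : ∀ n : ℕ, gaussTail 0 * (μ {0}).toReal ≤ (ℙ {ω | ((n:ℝ) + 1) ≤ Δ ω}).toReal := by
      intro n
      rw [hcond ((n:ℝ)+1) (by positivity)]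
      have h1 : ∫ z in ({0} : Set ℝ), gaussTail (((n:ℝ)+1) * z ^ (-(1 / 2) : ℝ)) ∂μ
          ≤ ∫ z, gaussTail (((n:ℝ)+1) * z ^ (-(1 / 2) : ℝ)) ∂μ :=
        setIntegral_le_integral (hint_f _) (ae_of_all _ fun z => gaussTail_nonneg _)
      rw [integral_singleton] at h1
      rw [Real.zero_rpow (by norm_num), mul_zero, smul_eq_mul] at h1
      rw [mul_comm]
      exact h1
    have hempty : (⋂ n : ℕ, {ω | ((n:ℝ) + 1) ≤ Δ ω}) = (∅ : Set Ω) := by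
      ext ω
      simp only [Set.mem_iInter, Set.mem_setOf_eq, Set.mem_empty_iff_false, iff_false, not_forall]
      obtain ⟨n, hn⟩ := exists_nat_gt (Δ ω)
      exact ⟨n, not_le.mpr (by linarith)⟩
    have hanti : Antitone (fun n : ℕ => {ω | ((n:ℝ) + 1) ≤ Δ ω}) := by
      intro m n hmn ω hω
      simp only [Set.mem_setOf_eq] at *
      have : (m:ℝ) ≤ (n:ℝ) := Nat.cast_le.mpr hmn
      linarith
    have htend := tendsto_measure_iInter_atTop (μ := ℙ)
      (fun n : ℕ => (measurableSet_le measurable_const hΔ).nullMeasurableSet)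
      hanti ⟨0, measure_ne_top _ _⟩
    rw [hempty, measure_empty] at htend
    have htend2 : Tendsto (fun n : ℕ => (ℙ {ω | ((n:ℝ) + 1) ≤ Δ ω}).toReal) atTop (𝓝 0) := by
      exact (ENNReal.tendsto_toReal (by simp)).comp htend
    have := le_of_tendsto_of_tendsto' tendsto_const_nhds htend2 hlow
    nlinarith [gaussTail_zero_pos]
  have hae_pos : ∀ᵐ z ∂μ, 0 < z := by
    have h1 : ∀ᵐ z ∂μ, 0 ≤ z := by
      rw [hμdef, ae_map_iff hV.aemeasurable measurableSet_Ici]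
      exact ae_of_all _ hVpos
    have h2 : ∀ᵐ z ∂μ, z ≠ 0 := by
      rw [ae_iff]
      convert hzero using 2
      ext z; simp
    filter_upwards [h1, h2] with z hz1 hz2
    exact lt_of_le_of_ne hz1 (Ne.symm hz2)
  refine ⟨1 + C, by linarith, fun x hx => ?_⟩
  have h1α : (0:ℝ) < 1 + α := by linarith
  set z₀ := x ^ ((2:ℝ) / (1 + α)) with hz₀def
  have hz₀pos : 0 < z₀ := Real.rpow_pos_of_pos hx _
  have hxγpos : 0 < x ^ (2 * α / (1 + α)) := Real.rpow_pos_of_pos hx _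
  have hkey : x ^ 2 * z₀⁻¹ = x ^ (2 * α / (1 + α)) := by
    rw [hz₀def, ← Real.rpow_natCast x 2, ← Real.rpow_neg hx.le, ← Real.rpow_add hx]
    congr 1
    push_cast
    field_simp
    ring
  have hz₀α : z₀ ^ α = x ^ (2 * α / (1 + α)) := by
    rw [hz₀def, ← Real.rpow_mul hx.le]
    congr 1
    field_simp
  have hbound : ∀ᵐ z ∂μ, gaussTail (x * z ^ (-(1 / 2) : ℝ))
      ≤ Real.exp (-(1/2) * x ^ (2 * α / (1 + α)))
        + Set.indicator (Set.Ici z₀) (fun _ => (1:ℝ)) z := by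
    filter_upwards [hae_pos] with z hz
    rcases le_or_gt z₀ z with hcase | hcase
    · rw [Set.indicator_of_mem (Set.mem_Ici.mpr hcase)]
      have := gaussTail_le_one (x * z ^ (-(1 / 2) : ℝ))
      linarith [Real.exp_nonneg (-(1/2) * x ^ (2 * α / (1 + α)))]
    · rw [Set.indicator_of_notMem (by simpa using hcase.not_ge), add_zero]
      have hu : x * z₀ ^ (-(1 / 2) : ℝ) ≤ x * z ^ (-(1 / 2) : ℝ) :=
        mul_le_mul_of_nonneg_left
          (Real.rpow_le_rpow_of_nonpos hz hcase.le (by norm_num)) hx.le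
      have hu0 : 0 ≤ x * z₀ ^ (-(1 / 2) : ℝ) :=
        mul_nonneg hx.le (Real.rpow_nonneg hz₀pos.le _)
      have hsq : (z₀ ^ (-(1 / 2) : ℝ)) ^ 2 = z₀⁻¹ := by
        rw [← Real.rpow_natCast (z₀ ^ (-(1 / 2) : ℝ)) 2, ← Real.rpow_mul hz₀pos.le]
        norm_num [Real.rpow_neg_one]
      calc gaussTail (x * z ^ (-(1 / 2) : ℝ))
          ≤ Real.exp (-(x * z ^ (-(1 / 2) : ℝ)) ^ 2 / 2) :=
            gaussTail_le_exp (le_trans hu0 hu)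
        _ ≤ Real.exp (-(x * z₀ ^ (-(1 / 2) : ℝ)) ^ 2 / 2) := by
            apply Real.exp_le_exp.mpr
            have := pow_le_pow_left₀ hu0 hu 2
            linarith
        _ = Real.exp (-(1/2) * x ^ (2 * α / (1 + α))) := by
            congr 1
            rw [mul_pow, hsq, hkey]
            ring
  have hint_h : Integrable (fun z : ℝ =>
      Real.exp (-(1/2) * x ^ (2 * α / (1 + α)))
        + Set.indicator (Set.Ici z₀) (fun _ => (1:ℝ)) z) μ :=
    (integrable_const _).add ((integrable_const (1:ℝ)).indicator measurableSet_Ici)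
  have hle := integral_mono_ae (hint_f x) hint_h hbound
  rw [integral_add (integrable_const _)
      ((integrable_const (1:ℝ)).indicator measurableSet_Ici),
    integral_const, integral_indicator_const (1:ℝ) measurableSet_Ici] at hle
  have hmap : (μ (Set.Ici z₀)).toReal = (ℙ {ω | z₀ ≤ V ω}).toReal := by
    rw [hμdef, Measure.map_apply hV measurableSet_Ici]
    rfl
  rw [hcond x hx]
  have htail' := htail z₀ hz₀pos.le
  rw [hz₀α] at htail'
  have e1 : Real.exp (-(1/2) * x ^ (2 * α / (1 + α)))
      ≤ Real.exp (-(min c (1/2)) * x ^ (2 * α / (1 + α))) := by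
    apply Real.exp_le_exp.mpr
    have := min_le_right c (1/2)
    nlinarith
  have e2 : Real.exp (-c * x ^ (2 * α / (1 + α)))
      ≤ Real.exp (-(min c (1/2)) * x ^ (2 * α / (1 + α))) := by
    apply Real.exp_le_exp.mpr
    have := min_le_left c (1/2)
    nlinarith
  have e3 : C * Real.exp (-c * x ^ (2 * α / (1 + α)))
      ≤ C * Real.exp (-(min c (1/2)) * x ^ (2 * α / (1 + α))) :=
    mul_le_mul_of_nonneg_left e2 hC.le
  have hsimp : (μ Set.univ).toReal • Real.exp (-(1/2) * x ^ (2 * α / (1 + α)))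
      = Real.exp (-(1/2) * x ^ (2 * α / (1 + α))) := by
    simp [measure_univ]
  simp only [Measure.real] at hle
  rw [hsimp, smul_eq_mul, mul_one, hmap] at hle
  calc ∫ z, gaussTail (x * z ^ (-(1 / 2) : ℝ)) ∂μ
      ≤ Real.exp (-(1/2) * x ^ (2 * α / (1 + α))) + (ℙ {ω | z₀ ≤ V ω}).toReal := hle
    _ ≤ Real.exp (-(1/2) * x ^ (2 * α / (1 + α)))
        + C * Real.exp (-c * x ^ (2 * α / (1 + α))) := by linarith
    _ ≤ (1 + C) * Real.exp (-(min c (1/2)) * x ^ (2 * α / (1 + α))) := by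
        rw [add_mul, one_mul]
        exact add_le_add e1 e3
end

section
/- Let λ ≥ 1, β > 0, c > 0. Then ∫₀^∞ exp(-c·λ^{2β}/u^{2β})·e^{-u} du ≤ C·λ^{2β/(1+2β)}·exp(-c'·λ^{2β/(1+2β)}) for some constants C, c' > 0 depending only on c and β. -/
open MeasureTheory Real Set

theorem stmt19 (c β : ℝ) (hc : 0 < c) (hβ : 0 < β) :
    ∃ C > 0, ∃ c' > 0, ∀ lam : ℝ, 1 ≤ lam →
      ∫ u in Set.Ioi (0:ℝ), Real.exp (-c * lam ^ (2 * β) / u ^ (2 * β)) * Real.exp (-u) ≤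
        C * lam ^ (2 * β / (1 + 2 * β)) * Real.exp (-c' * lam ^ (2 * β / (1 + 2 * β))) := by
  set γ : ℝ := 2 * β / (1 + 2 * β) with hγdef
  have h1 : (0:ℝ) < 1 + 2 * β := by linarith
  have hγpos : 0 < γ := by positivity
  refine ⟨2, by norm_num, min c (1/2), lt_min hc (by norm_num), ?_⟩
  intro lam hlam
  have hlam0 : (0:ℝ) < lam := lt_of_lt_of_le one_pos hlam
  have hT1 : (1:ℝ) ≤ lam ^ γ := Real.one_le_rpow hlam hγpos.le
  have hTpos : (0:ℝ) < lam ^ γ := lt_of_lt_of_le one_pos hT1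
  -- key exponent identity : 2β - γ * 2β = γ
  have hexp : 2 * β - γ * (2 * β) = γ := by
    rw [hγdef]; field_simp; ring
  -- pointwise bound
  have key : ∀ u ∈ Set.Ioi (0:ℝ),
      Real.exp (-c * lam ^ (2 * β) / u ^ (2 * β)) * Real.exp (-u) ≤
        Real.exp (-(min c (1/2)) * lam ^ γ) * Real.exp (-(1/2 * u)) := by
    intro u hu
    have hu0 : (0:ℝ) < u := hu
    rw [← Real.exp_add, ← Real.exp_add]
    apply Real.exp_le_exp.2
    have hup : (0:ℝ) < u ^ (2 * β) := Real.rpow_pos_of_pos hu0 _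
    rcases le_or_gt (lam ^ γ) u with h | h
    · -- u ≥ λ^γ : use u/2 ≥ λ^γ/2
      have h2 : min c (1/2) * lam ^ γ ≤ 1/2 * u := by
        calc min c (1/2) * lam ^ γ ≤ 1/2 * lam ^ γ := by
              apply mul_le_mul_of_nonneg_right (min_le_right _ _) hTpos.le
          _ ≤ 1/2 * u := by linarith
      have h3 : (0:ℝ) ≤ c * lam ^ (2 * β) / u ^ (2 * β) := by positivity
      have : -c * lam ^ (2 * β) / u ^ (2 * β) ≤ 0 := by
        rw [neg_mul, neg_div]; linarith
      linarith
    · -- u < λ^γ : use c λ^{2β}/u^{2β} ≥ c λ^γ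
      have hub : u ^ (2 * β) ≤ (lam ^ γ) ^ (2 * β) :=
        Real.rpow_le_rpow hu0.le h.le (by positivity)
      have hLT : (lam ^ γ) ^ (2 * β) = lam ^ (γ * (2 * β)) :=
        (Real.rpow_mul hlam0.le γ (2 * β)).symm
      have hdiv : lam ^ γ ≤ lam ^ (2 * β) / u ^ (2 * β) := by
        rw [le_div_iff₀ hup]
        calc lam ^ γ * u ^ (2 * β) ≤ lam ^ γ * lam ^ (γ * (2 * β)) := by
              rw [← hLT]; exact mul_le_mul_of_nonneg_left hub hTpos.le
          _ = lam ^ (γ + γ * (2 * β)) := (Real.rpow_add hlam0 _ _).symm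
          _ = lam ^ (2 * β) := by rw [show γ + γ * (2 * β) = 2 * β by linarith [hexp]]
      have h2 : min c (1/2) * lam ^ γ ≤ c * (lam ^ (2 * β) / u ^ (2 * β)) := by
        calc min c (1/2) * lam ^ γ ≤ c * lam ^ γ :=
              mul_le_mul_of_nonneg_right (min_le_left _ _) hTpos.le
          _ ≤ c * (lam ^ (2 * β) / u ^ (2 * β)) :=
              mul_le_mul_of_nonneg_left hdiv hc.le
      have : -c * lam ^ (2 * β) / u ^ (2 * β) = -(c * (lam ^ (2 * β) / u ^ (2 * β))) := by
        ring
      rw [this]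
      linarith
  -- integrability
  have hmeas : AEStronglyMeasurable
      (fun u : ℝ => Real.exp (-c * lam ^ (2 * β) / u ^ (2 * β)) * Real.exp (-u))
      (volume.restrict (Set.Ioi (0:ℝ))) := by
    apply Measurable.aestronglyMeasurable
    fun_prop
  have hint_exp : IntegrableOn (fun u : ℝ => Real.exp (-1 * u)) (Set.Ioi (0:ℝ)) :=
    exp_neg_integrableOn_Ioi 0 one_pos
  have hint_f : IntegrableOn
      (fun u : ℝ => Real.exp (-c * lam ^ (2 * β) / u ^ (2 * β)) * Real.exp (-u))
      (Set.Ioi (0:ℝ)) := by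
    apply hint_exp.integrable.mono' hmeas
    filter_upwards [ae_restrict_mem measurableSet_Ioi] with u hu
    have hu0 : (0:ℝ) < u := hu
    have h1' : Real.exp (-c * lam ^ (2 * β) / u ^ (2 * β)) ≤ 1 := by
      apply Real.exp_le_one_iff.2
      have : (0:ℝ) ≤ c * lam ^ (2 * β) / u ^ (2 * β) := by positivity
      rw [neg_mul, neg_div]; linarith
    rw [Real.norm_eq_abs, abs_of_pos (by positivity)]
    simp only [neg_one_mul]
    calc Real.exp (-c * lam ^ (2 * β) / u ^ (2 * β)) * Real.exp (-u)
        ≤ 1 * Real.exp (-u) := mul_le_mul_of_nonneg_right h1' (Real.exp_pos _).le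
      _ = Real.exp (-u) := one_mul _
  have hint_g : IntegrableOn
      (fun u : ℝ => Real.exp (-(min c (1/2)) * lam ^ γ) * Real.exp (-(1/2 * u)))
      (Set.Ioi (0:ℝ)) := by
    apply Integrable.const_mul
    have := exp_neg_integrableOn_Ioi 0 (show (0:ℝ) < 1/2 by norm_num)
    simpa [neg_mul] using this.integrable
  -- compute the integral of the bound
  have hval : ∫ u in Set.Ioi (0:ℝ),
      Real.exp (-(min c (1/2)) * lam ^ γ) * Real.exp (-(1/2 * u)) =
      Real.exp (-(min c (1/2)) * lam ^ γ) * 2 := by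
    rw [MeasureTheory.integral_const_mul]
    congr 1
    have h2 := MeasureTheory.integral_comp_mul_left_Ioi (fun x => Real.exp (-x)) 0
      (show (0:ℝ) < 1/2 by norm_num)
    simp only [mul_zero, neg_zero] at h2
    rw [integral_exp_neg_Ioi] at h2
    rw [h2]; norm_num
  calc ∫ u in Set.Ioi (0:ℝ), Real.exp (-c * lam ^ (2 * β) / u ^ (2 * β)) * Real.exp (-u)
      ≤ ∫ u in Set.Ioi (0:ℝ),
          Real.exp (-(min c (1/2)) * lam ^ γ) * Real.exp (-(1/2 * u)) :=
        setIntegral_mono_on hint_f hint_g measurableSet_Ioi key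
    _ = Real.exp (-(min c (1/2)) * lam ^ γ) * 2 := hval
    _ ≤ 2 * lam ^ γ * Real.exp (-(min c (1/2)) * lam ^ γ) := by
        nlinarith [Real.exp_pos (-(min c (1/2)) * lam ^ γ)]
end
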